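/- arXiv:2003.06759 — 2 statements merged into one kernel-verified Lean document; each statement's English description precedes it below -/
import Mathlib

section
/- If every vertex of the associated directed graph Γ̃ has at least one normal-arrow arising from it, then there exist a positive integer k and vertices v₁, …, v_{2k} ∈ V(Γ̃) (not necessarily pairwise distinct) such that for every i = 1, …, k there is a normal-arrow v_{2i−1} ⟶ v_{2i} and a dashed-arrow v_{2i} ⇢ v_{2i+1} in Γ̃, where v_{2k+1} := v₁. -/
/-- Property (*): a bijection `f` between the vertex sets together with, for every vertex `v`,
a fixed isomorphism `φ v` from `Γ − v` onto `Γ' − f v` (encoded as an adjacency-preserving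
bijection between the vertex sets with `v`, resp. `f v`, removed). -/
structure RCSetup {V V' : Type*} (G : SimpleGraph V) (G' : SimpleGraph V') where
  f : V ≃ V'
  φ : ∀ v : V, {w : V // w ≠ v} ≃ {w' : V' // w' ≠ f v}
  adj_iff : ∀ (v : V) (x y : {w : V // w ≠ v}),
    G.Adj x.1 y.1 ↔ G'.Adj (φ v x).1 (φ v y).1

variable {V V' : Type*} {G : SimpleGraph V} {G' : SimpleGraph V'}

/-- There is a normal-arrow `v₁ ⟶ v₂` in the associated directed graph. -/
def RCSetup.Normal (H : RCSetup G G') (v₁ v₂ : V) : Prop :=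
  ∃ h : v₂ ≠ v₁, ¬ G.Adj v₁ v₂ ∧ G'.Adj (H.f v₁) (H.φ v₁ ⟨v₂, h⟩).1

/-- There is a dashed-arrow `v₁ ⇢ v₂` in the associated directed graph. -/
def RCSetup.Dashed (H : RCSetup G G') (v₁ v₂ : V) : Prop :=
  ∃ h : H.f v₂ ≠ H.f v₁, ¬ G'.Adj (H.f v₁) (H.f v₂) ∧ G.Adj v₁ ((H.φ v₁).symm ⟨H.f v₂, h⟩).1

/-!
Since `Γ` has at least three vertices, Kelly's counting argument (every edge lies in exactly
`n - 2` of the vertex-deleted subgraphs) shows that `Γ` and `Γ'` have the same number of edges,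
hence `deg v = deg (f v)` for every vertex. Inside `V ∖ {v}`, the neighbourhood `A` of `v` and the
preimage `B` under `φ_v` of the neighbourhood of `f v` therefore have the same size. A normal-arrow
from `v` is an element of `B ∖ A`, so `A ∖ B` is nonempty too, and each of its elements gives a
dashed-arrow from `v`. Following a chosen normal-arrow and then a chosen dashed-arrow is a
self-map of the finite vertex set, and the orbit of a periodic point is the required cycle.
-/

open Finset

namespace Function

theorem exists_isPeriodicPt_of_finite {α : Type*} [Finite α] [Nonempty α] (t : α → α) :
    ∃ x, ∃ k, 0 < k ∧ IsPeriodicPt t k x := by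
  obtain ⟨m, n, hmn, heq⟩ :=
    Finite.exists_ne_map_eq_of_infinite fun i : ℕ => t^[i] (Classical.arbitrary α)
  wlog hlt : m < n generalizing m n
  · exact this n m hmn.symm heq.symm (by omega)
  refine ⟨t^[m] (Classical.arbitrary α), n - m, by omega, ?_⟩
  rw [IsPeriodicPt, IsFixedPt, ← iterate_add_apply, Nat.sub_add_cancel hlt.le, heq]

end Function

theorem Finset.exists_mem_notMem_of_card_eq {α : Type*} {s t : Finset α} (hst : #s = #t)
    (h : ∃ a ∈ t, a ∉ s) : ∃ a ∈ s, a ∉ t := by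
  by_contra! hsub
  obtain ⟨a, hat, has⟩ := h
  exact has (Finset.eq_of_subset_of_card_le hsub hst.ge ▸ hat)

theorem exists_alternating_closed_walk {α : Type*} [Finite α] [Nonempty α]
    {R S : α → α → Prop} (hR : ∀ a, ∃ b, R a b) (hS : ∀ b, ∃ c, S b c) :
    ∃ (k : ℕ) (v : ℕ → α), 0 < k ∧ v (2 * k + 1) = v 1 ∧
      ∀ i : ℕ, 1 ≤ i → i ≤ k →
        R (v (2 * i - 1)) (v (2 * i)) ∧ S (v (2 * i)) (v (2 * i + 1)) := by
  choose g hg using hR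
  choose s hs using hS
  obtain ⟨u, k, hk, hu⟩ := Function.exists_isPeriodicPt_of_finite (s ∘ g)
  -- `v (2 j + 1) = (s ∘ g)^[j] u` and `v (2 j + 2) = g ((s ∘ g)^[j] u)`
  refine ⟨k, fun j => (if Even j then g else id) ((s ∘ g)^[(j - 1) / 2] u), hk, ?_, ?_⟩
  · simpa [Nat.even_add_one, Nat.mul_div_cancel_left] using hu.eq
  · intro i hi _
    obtain ⟨j, rfl⟩ : ∃ j, i = j + 1 := ⟨i - 1, by omega⟩
    have h₁ : 2 * (j + 1) - 1 = 2 * j + 1 := by omega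
    have h₂ : (2 * j + 1) / 2 = j := by omega
    have h₃ : (2 * (j + 1) + 1 - 1) / 2 = j + 1 := by omega
    have h₄ : (2 * j + 1 - 1) / 2 = j := by omega
    simp only [h₁, h₂, h₃, h₄, Nat.even_add_one, even_two_mul, Function.iterate_succ_apply',
      Function.comp_apply, if_true, if_false, not_true, id]
    exact ⟨hg _, hs _⟩

namespace SimpleGraph

variable [Fintype V] [DecidableEq V] (G) [DecidableRel G.Adj]

theorem card_edgeFinset_induce_compl_singleton_add_degree (v : V) :
    #(G.induce {v}ᶜ).edgeFinset + G.degree v = #G.edgeFinset := by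
  rw [card_edgeFinset_induce_compl_singleton, card_edgeFinset_deleteIncidenceSet,
    ← card_incidenceFinset_eq_degree]
  exact Nat.sub_add_cancel (card_le_card (G.incidenceFinset_subset v))

/-- Kelly's lemma: the vertex-deleted subgraphs determine the number of edges. -/
theorem sum_card_edgeFinset_induce_compl_singleton_add :
    ∑ v, #(G.induce {v}ᶜ).edgeFinset + 2 * #G.edgeFinset = Fintype.card V * #G.edgeFinset := by
  rw [← sum_degrees_eq_twice_card_edges, ← sum_add_distrib]
  simp [card_edgeFinset_induce_compl_singleton_add_degree]

theorem card_subtype_neighborFinset_ne (v : V) :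
    #((G.neighborFinset v).subtype (· ≠ v)) = G.degree v := by
  have hne : ∀ w ∈ G.neighborFinset v, w ≠ v := fun w hw =>
    (G.ne_of_adj ((G.mem_neighborFinset v w).1 hw)).symm
  rw [card_subtype, filter_true_of_mem hne, card_neighborFinset_eq_degree]

end SimpleGraph

namespace RCSetup

def isoInduce (H : RCSetup G G') (v : V) : G.induce {v}ᶜ ≃g G'.induce {H.f v}ᶜ where
  toEquiv := H.φ v
  map_rel_iff' := (H.adj_iff v _ _).symm

section Finite

variable [Fintype V] [Fintype V'] [DecidableEq V] [DecidableEq V']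
  [DecidableRel G.Adj] [DecidableRel G'.Adj]

theorem card_edgeFinset_induce_compl_singleton_eq (H : RCSetup G G') (v : V) :
    #(G'.induce {H.f v}ᶜ).edgeFinset = #(G.induce {v}ᶜ).edgeFinset :=
  (H.isoInduce v).card_edgeFinset_eq.symm

theorem card_edgeFinset_eq (H : RCSetup G G') (h3 : 3 ≤ Fintype.card V) :
    #G'.edgeFinset = #G.edgeFinset := by
  have hG := G.sum_card_edgeFinset_induce_compl_singleton_add
  have hG' := G'.sum_card_edgeFinset_induce_compl_singleton_add
  rw [← Fintype.card_congr H.f, ← H.f.sum_comp] at hG'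
  simp only [H.card_edgeFinset_induce_compl_singleton_eq] at hG'
  zify at hG hG'
  have hn : ((Fintype.card V : ℤ) - 2) ≠ 0 := by omega
  have : ((Fintype.card V : ℤ) - 2) * #G'.edgeFinset = (Fintype.card V - 2) * #G.edgeFinset := by
    linear_combination hG - hG'
  exact_mod_cast mul_left_cancel₀ hn this

theorem degree_eq (H : RCSetup G G') (h3 : 3 ≤ Fintype.card V) (v : V) :
    G'.degree (H.f v) = G.degree v := by
  have hG := G.card_edgeFinset_induce_compl_singleton_add_degree v
  have hG' := G'.card_edgeFinset_induce_compl_singleton_add_degree (H.f v)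
  rw [H.card_edgeFinset_induce_compl_singleton_eq, H.card_edgeFinset_eq h3] at hG'
  omega

end Finite

theorem dashed_f_symm (H : RCSetup G G') {v : V} {y : {w' : V' // w' ≠ H.f v}}
    (hy : ¬ G'.Adj (H.f v) y) (hv : G.Adj v ((H.φ v).symm y)) : H.Dashed v (H.f.symm y) := by
  obtain ⟨y, hne⟩ := y
  obtain ⟨u, rfl⟩ := H.f.surjective y
  simpa [Dashed, hne] using And.intro hy hv

theorem exists_dashed_of_normal [Fintype V] [Fintype V'] [DecidableEq V] [DecidableEq V']
    [DecidableRel G.Adj] [DecidableRel G'.Adj] (H : RCSetup G G') {v w : V}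
    (hdeg : G'.degree (H.f v) = G.degree v) (hvw : H.Normal v w) : ∃ u, H.Dashed v u := by
  set A := (G.neighborFinset v).subtype (· ≠ v)
  set B := ((G'.neighborFinset (H.f v)).subtype (· ≠ H.f v)).map (H.φ v).symm.toEmbedding
  have hAB : #A = #B := by
    rw [card_map, G.card_subtype_neighborFinset_ne, G'.card_subtype_neighborFinset_ne, hdeg]
  obtain ⟨hwv, hnadj, hadj'⟩ := hvw
  obtain ⟨x, hxA, hxB⟩ := Finset.exists_mem_notMem_of_card_eq hAB
    ⟨⟨w, hwv⟩, by simpa [A, B] using ⟨hadj', hnadj⟩⟩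
  simp only [A, B, mem_subtype, SimpleGraph.mem_neighborFinset, mem_map_equiv,
    Equiv.symm_symm] at hxA hxB
  exact ⟨_, H.dashed_f_symm (y := H.φ v x) hxB (by simpa using hxA)⟩

end RCSetup

theorem stmt_3_general [Fintype V] [Fintype V']
    (h3 : 3 ≤ Fintype.card V)
    (H : RCSetup G G')
    (h : ∀ v : V, ∃ w : V, H.Normal v w) :
    ∃ (k : ℕ) (v : ℕ → V), 0 < k ∧ v (2 * k + 1) = v 1 ∧
      ∀ i : ℕ, 1 ≤ i → i ≤ k →
        H.Normal (v (2 * i - 1)) (v (2 * i)) ∧ H.Dashed (v (2 * i)) (v (2 * i + 1)) := by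
  classical
  have : Nonempty V := Fintype.card_pos_iff.mp (by omega)
  refine exists_alternating_closed_walk h fun v => ?_
  obtain ⟨w, hvw⟩ := h v
  exact H.exists_dashed_of_normal (H.degree_eq h3 v) hvw

/-- If every vertex has at least one normal-arrow arising from it, then there is a cycle
`v₁, …, v_{2k}` (vertices not necessarily distinct, `v_{2k+1} := v₁`) with alternate
normal-arrows `v_{2i−1} ⟶ v_{2i}` and dashed-arrows `v_{2i} ⇢ v_{2i+1}`. -/
theorem stmt_3 [Fintype V] [Fintype V']
    (h3 : 3 ≤ Fintype.card V) (h3' : 3 ≤ Fintype.card V')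
    (H : RCSetup G G')
    (h : ∀ v : V, ∃ w : V, H.Normal v w) :
    ∃ (k : ℕ) (v : ℕ → V), 0 < k ∧ v (2 * k + 1) = v 1 ∧
      ∀ i : ℕ, 1 ≤ i → i ≤ k →
        H.Normal (v (2 * i - 1)) (v (2 * i)) ∧ H.Dashed (v (2 * i)) (v (2 * i + 1)) :=
  stmt_3_general h3 H h
end

section
/- Assume there are normal-arrows v₁ ⟶ v₂ and v₂ ⟶ v₁ in Γ̃ and the cycle v₁, v₂ is α-type with associated length n and vertices a_i := b_{n−i+1}, a'_i := b'_i. Let Ψ := φ_{v₂}^{-1}∘φ_{v₁} and Ψ' := φ_{v₂}∘φ_{v₁}^{-1}, and define X := {x ∈ V(Γ)∖{a₁,…,a_n} : Ψ(x) ≠ x}, Y := {y ∈ V(Γ)∖{a₁,…,a_n} : Ψ(y) = y}, X' := {x' ∈ V(Γ')∖{a'₁,…,a'_n} : Ψ'(x') ≠ x'}, Y' := {y' ∈ V(Γ')∖{a'₁,…,a'_n} : Ψ'(y') = y'}. Then for each i = 1, 2: φ_{v_i}(X) = X' and φ_{v_i}(Y) = Y', and φ_{v_i} restricts to a graph isomorphism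 from the induced subgraph of Γ on X onto the induced subgraph of Γ' on X', and from the induced subgraph of Γ on Y onto the induced subgraph of Γ' on Y'. -/
variable {V V' : Type*} {G : SimpleGraph V} {G' : SimpleGraph V'}

open Classical

/-- Partial version of `φ v`: defined on every vertex except `v` itself. -/
noncomputable def RCSetup.pphi (H : RCSetup G G') (v x : V) : Option V' :=
  if h : x ≠ v then some (H.φ v ⟨x, h⟩).1 else none

/-- Partial version of `(φ v)⁻¹`: defined on every vertex except `f v` itself. -/
noncomputable def RCSetup.pphiInv (H : RCSetup G G') (v : V) (x' : V') : Option V :=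
  if h : x' ≠ H.f v then some ((H.φ v).symm ⟨x', h⟩).1 else none

/-- The partial sequence `(b'_i)` in `V'` attached to the cycle `v₁, v₂`:
`b'₁ = f v₁`, `b'₂ = φ_{v₁}(v₂)`, and `b'_{i+2} = φ_{v₁}(φ_{v₂}⁻¹(b'_i))`, a term being
`none` (blank) whenever an intermediate value leaves the domain of the next map. -/
noncomputable def RCSetup.bp (H : RCSetup G G') (v₁ v₂ : V) : ℕ → Option V'
  | 0 => none
  | 1 => some (H.f v₁)
  | 2 => H.pphi v₁ v₂
  | (i + 3) => ((H.bp v₁ v₂ (i + 1)).bind (H.pphiInv v₂)).bind (H.pphi v₁)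

/-- The partial sequence `(b_i)` in `V` attached to the cycle `v₁, v₂`:
`b₁ = v₂`, `b₂ = φ_{v₂}⁻¹(f v₁)`, and `b_{i+2} = φ_{v₂}⁻¹(φ_{v₁}(b_i))`, a term being
`none` (blank) whenever an intermediate value leaves the domain of the next map. -/
noncomputable def RCSetup.bq (H : RCSetup G G') (v₁ v₂ : V) : ℕ → Option V
  | 0 => none
  | 1 => some v₂
  | 2 => H.pphiInv v₂ (H.f v₁)
  | (i + 3) => ((H.bq v₁ v₂ (i + 1)).bind (H.pphi v₁)).bind (H.pphiInv v₂)

/-- The cycle `v₁, v₂` is α-type with associated length `n`: the terms `b'_i` and `b_i` are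
defined exactly for `1 ≤ i ≤ n`, with `b'_n = f v₂` and `b_n = v₁`. -/
def RCSetup.AlphaTwo (H : RCSetup G G') (v₁ v₂ : V) (n : ℕ) : Prop :=
  (∀ i : ℕ, 1 ≤ i → i ≤ n → (H.bp v₁ v₂ i).isSome ∧ (H.bq v₁ v₂ i).isSome) ∧
  (∀ i : ℕ, n < i → H.bp v₁ v₂ i = none ∧ H.bq v₁ v₂ i = none) ∧
  H.bp v₁ v₂ n = some (H.f v₂) ∧ H.bq v₁ v₂ n = some v₁

/-- The partial map `Ψ = φ_{v₂}⁻¹ ∘ φ_{v₁}` on `V`. -/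
noncomputable def RCSetup.psiPart (H : RCSetup G G') (v₁ v₂ : V) (x : V) : Option V :=
  (H.pphi v₁ x).bind (H.pphiInv v₂)

/-- The partial map `Ψ' = φ_{v₂} ∘ φ_{v₁}⁻¹` on `V'`. -/
noncomputable def RCSetup.psiPart' (H : RCSetup G G') (v₁ v₂ : V) (x' : V') : Option V' :=
  (H.pphiInv v₁ x').bind (H.pphi v₂)

/-!
The vertices `a_i = b_{n-i+1}` and `a'_i = b'_i` form two cycles that correspond under both
`φ_{v₁}` and `φ_{v₂}`: the first sends `b_i` to `b'_{i+1}`, the second sends `b_{i+1}` to `b'_i`,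
and the α-condition makes both sequences stop at the same index `n`. As `v_i` and `f v_i` lie on
these cycles, each `φ_{v_i}` restricts to a bijection between their complements. There, `x` is
`Ψ`-fixed, and `φ_{v_i}(x)` is `Ψ'`-fixed, exactly when `φ_{v₁}(x) = φ_{v₂}(x)`; so `φ_{v_i}` maps
`X` onto `X'` and `Y` onto `Y'`, and, being an isomorphism `Γ − v_i ≅ Γ' − f v_i`, it restricts to
isomorphisms of the induced subgraphs.
-/

def termsUpTo {α : Type*} (s : ℕ → Option α) (n : ℕ) : Set α :=
  {x | ∃ i, 1 ≤ i ∧ i ≤ n ∧ s i = some x}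

theorem forall_ne_iff_notMem_termsUpTo {α : Type*} {s : ℕ → Option α} {n : ℕ} {a : ℕ → α}
    (ha : ∀ i, 1 ≤ i → i ≤ n → s i = some (a i)) {x : α} :
    (∀ i, 1 ≤ i → i ≤ n → x ≠ a i) ↔ x ∉ termsUpTo s n := by
  refine ⟨fun h ⟨i, hi, hin, hx⟩ => h i hi hin ?_, fun h i hi hin hx => h ⟨i, hi, hin, ?_⟩⟩
  · exact Option.some_injective _ (hx.symm.trans (ha i hi hin))
  · rw [ha i hi hin, hx]

theorem forall_ne_iff_notMem_termsUpTo_rev {α : Type*} {s : ℕ → Option α} {n : ℕ} {a : ℕ → α}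
    (ha : ∀ i, 1 ≤ i → i ≤ n → s (n - i + 1) = some (a i)) {x : α} :
    (∀ i, 1 ≤ i → i ≤ n → x ≠ a i) ↔ x ∉ termsUpTo s n := by
  rw [← forall_ne_iff_notMem_termsUpTo (a := fun i => a (n - i + 1))]
  · refine ⟨fun h i hi hin => h _ (by omega) (by omega), fun h i hi hin => ?_⟩
    simpa [show n - (n - i + 1) + 1 = i by omega] using h (n - i + 1) (by omega) (by omega)
  · intro i hi hin
    simpa [show n - (n - i + 1) + 1 = i by omega] using ha (n - i + 1) (by omega) (by omega)

theorem mem_termsUpTo_iff_of_bind {α β : Type*} {s : ℕ → Option α} {t : ℕ → Option β}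
    {g : α → Option β} {n : ℕ} (hg : ∀ {a₁ a₂ b}, g a₁ = some b → g a₂ = some b → a₁ = a₂)
    (ht : ∀ i, 1 ≤ i → t (i + 1) = (s i).bind g) (ht₁ : ∀ a, g a ≠ t 1)
    (htn : ∀ i, n < i → t i = none) {a : α} {b : β} (hab : g a = some b) :
    a ∈ termsUpTo s n ↔ b ∈ termsUpTo t n := by
  constructor
  · rintro ⟨i, hi, -, hsi⟩
    have hti : t (i + 1) = some b := by rw [ht i hi, hsi, Option.bind_some, hab]
    refine ⟨i + 1, by omega, not_lt.1 fun h => ?_, hti⟩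
    simp [htn _ h] at hti
  · rintro ⟨_ | _ | j, hi, hin, hti⟩
    · omega
    · exact absurd (hab.trans hti.symm) (ht₁ a)
    · obtain ⟨a', hsj, ha'⟩ := Option.bind_eq_some_iff.1 ((ht (j + 1) (by omega)).symm.trans hti)
      exact ⟨j + 1, by omega, by omega, hg hab ha' ▸ hsj⟩

namespace RCSetup

variable (H : RCSetup G G')

theorem pphi_eq_some_iff {v x : V} {x' : V'} :
    H.pphi v x = some x' ↔ ∃ h : x ≠ v, (H.φ v ⟨x, h⟩).1 = x' := by
  unfold pphi
  split_ifs with h <;> simp [h]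

theorem pphiInv_eq_some_iff {v x : V} {x' : V'} :
    H.pphiInv v x' = some x ↔ H.pphi v x = some x' := by
  rw [pphi_eq_some_iff]
  unfold pphiInv
  split_ifs with h
  · refine ⟨?_, fun ⟨hx, hx'⟩ => ?_⟩
    · rw [Option.some_inj]
      rintro rfl
      exact ⟨((H.φ v).symm ⟨x', h⟩).2, by simp⟩
    · subst hx'
      simp
  · simp only [false_iff, not_exists]
    rintro hx rfl
    exact h (H.φ v ⟨x, hx⟩).2

theorem pphi_inj {v x₁ x₂ : V} {x' : V'} (h₁ : H.pphi v x₁ = some x')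
    (h₂ : H.pphi v x₂ = some x') : x₁ = x₂ := by
  rw [← pphiInv_eq_some_iff] at h₁ h₂
  exact Option.some_injective _ (h₁.symm.trans h₂)

theorem pphiInv_inj {v x : V} {x₁' x₂' : V'} (h₁ : H.pphiInv v x₁' = some x)
    (h₂ : H.pphiInv v x₂' = some x) : x₁' = x₂' := by
  rw [pphiInv_eq_some_iff] at h₁ h₂
  exact Option.some_injective _ (h₁.symm.trans h₂)

theorem pphi_ne_some_f (v x : V) : H.pphi v x ≠ some (H.f v) := by
  rw [Ne, pphi_eq_some_iff]
  exact fun ⟨hx, h⟩ => (H.φ v ⟨x, hx⟩).2 h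

theorem pphiInv_ne_some_self (v : V) (x' : V') : H.pphiInv v x' ≠ some v := by
  rw [Ne, pphiInv_eq_some_iff, pphi_eq_some_iff]
  exact fun ⟨hv, _⟩ => hv rfl

theorem bq_add_two (v₁ v₂ : V) :
    ∀ i, H.bq v₁ v₂ (i + 2) = (H.bp v₁ v₂ (i + 1)).bind (H.pphiInv v₂)
  | 0 => by simp [bq, bp]
  | 1 => by simp [bq, bp]
  | i + 2 => by
      show H.bq v₁ v₂ (i + 1 + 3) = (H.bp v₁ v₂ (i + 3)).bind _
      rw [bq, bp, bq_add_two v₁ v₂ i]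

theorem bp_add_two (v₁ v₂ : V) :
    ∀ i, H.bp v₁ v₂ (i + 2) = (H.bq v₁ v₂ (i + 1)).bind (H.pphi v₁)
  | 0 => by simp [bq, bp, pphi]
  | i + 1 => by
      show H.bp v₁ v₂ (i + 3) = (H.bq v₁ v₂ (i + 2)).bind _
      rw [bp, bq_add_two]

variable {H} {v₁ v₂ : V} {n : ℕ}

/-- `φ_{v₁}` sends `b_i` to `b'_{i+1}` and `φ_{v₂}` sends `b_{i+1}` to `b'_i`. -/
theorem mem_termsUpTo_bq_iff (hn : ∀ i, n < i → H.bp v₁ v₂ i = none ∧ H.bq v₁ v₂ i = none)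
    {v x : V} {x' : V'} (hv : v = v₁ ∨ v = v₂) (h : H.pphi v x = some x') :
    x ∈ termsUpTo (H.bq v₁ v₂) n ↔ x' ∈ termsUpTo (H.bp v₁ v₂) n := by
  rcases hv with rfl | rfl
  · refine mem_termsUpTo_iff_of_bind H.pphi_inj (fun i hi => ?_) (H.pphi_ne_some_f v)
      (fun i hi => (hn i hi).1) h
    obtain ⟨j, rfl⟩ : ∃ j, i = j + 1 := ⟨i - 1, by omega⟩
    exact H.bp_add_two _ _ j
  · refine (mem_termsUpTo_iff_of_bind H.pphiInv_inj (fun i hi => ?_)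
      (H.pphiInv_ne_some_self v) (fun i hi => (hn i hi).2) (H.pphiInv_eq_some_iff.2 h)).symm
    obtain ⟨j, rfl⟩ : ∃ j, i = j + 1 := ⟨i - 1, by omega⟩
    exact H.bq_add_two _ _ j

variable (H v₁ v₂)

theorem psiPart_eq_self_iff {x : V} :
    H.psiPart v₁ v₂ x = some x ↔ ∃ x', H.pphi v₁ x = some x' ∧ H.pphi v₂ x = some x' := by
  simp only [psiPart, Option.bind_eq_some_iff, pphiInv_eq_some_iff]

theorem psiPart'_eq_self_iff {x' : V'} :
    H.psiPart' v₁ v₂ x' = some x' ↔ ∃ x, H.pphi v₁ x = some x' ∧ H.pphi v₂ x = some x' := by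
  simp only [psiPart', Option.bind_eq_some_iff, pphiInv_eq_some_iff]

variable {H v₁ v₂}

/-- Both sides say that `φ_{v₁}` and `φ_{v₂}` agree at `x`. -/
theorem psiPart_eq_self_iff_psiPart' {v x : V} {x' : V'} (hv : v = v₁ ∨ v = v₂)
    (h : H.pphi v x = some x') :
    H.psiPart v₁ v₂ x = some x ↔ H.psiPart' v₁ v₂ x' = some x' := by
  rw [psiPart_eq_self_iff, psiPart'_eq_self_iff]
  rcases hv with rfl | rfl
  · refine ⟨fun ⟨y', h₁, h₂⟩ => ⟨x, h, ?_⟩, fun ⟨y, h₁, h₂⟩ => ⟨x', h, ?_⟩⟩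
    · rwa [Option.some_injective _ (h.symm.trans h₁)]
    · rwa [H.pphi_inj h h₁]
  · refine ⟨fun ⟨y', h₁, h₂⟩ => ⟨x, ?_, h⟩, fun ⟨y, h₁, h₂⟩ => ⟨x', ?_, h⟩⟩
    · rwa [Option.some_injective _ (h.symm.trans h₂)]
    · rwa [H.pphi_inj h h₂]

variable (H)

theorem image_pphi_eq {v : V} {S : Set V} {S' : Set V'} (hS : v ∉ S) (hS' : H.f v ∉ S')
    (hmem : ∀ x x', H.pphi v x = some x' → (x ∈ S ↔ x' ∈ S')) :
    H.pphi v '' S = some '' S' := by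
  ext y
  constructor
  · rintro ⟨x, hx, rfl⟩
    have h := H.pphi_eq_some_iff.2 ⟨ne_of_mem_of_not_mem hx hS, rfl⟩
    exact ⟨_, (hmem _ _ h).1 hx, h.symm⟩
  · rintro ⟨x', hx', rfl⟩
    have h := H.pphiInv_eq_some_iff.1 (dif_pos (ne_of_mem_of_not_mem hx' hS'))
    exact ⟨_, (hmem _ _ h).2 hx', h⟩

theorem exists_iso_induce {v : V} {S : Set V} {S' : Set V'} (hS : v ∉ S) (hS' : H.f v ∉ S')
    (hmem : ∀ x x', H.pphi v x = some x' → (x ∈ S ↔ x' ∈ S')) :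
    ∃ ψ : G.induce S ≃g G'.induce S', ∀ x (hx : x ∈ S), H.pphi v x = some (ψ ⟨x, hx⟩).1 := by
  have hmem' (x : {w // w ≠ v}) : x.1 ∈ S ↔ (H.φ v x).1 ∈ S' :=
    hmem _ _ (H.pphi_eq_some_iff.2 ⟨x.2, rfl⟩)
  let e : S ≃ S' := (Equiv.subtypeSubtypeEquivSubtype fun hx => ne_of_mem_of_not_mem hx hS).symm
    |>.trans ((H.φ v).subtypeEquiv hmem')
    |>.trans (Equiv.subtypeSubtypeEquivSubtype fun hx => ne_of_mem_of_not_mem hx hS')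
  exact ⟨⟨e, fun {x y} => (H.adj_iff v ⟨x, _⟩ ⟨y, _⟩).symm⟩, fun x hx => dif_pos _⟩

theorem image_and_iso_of_compl {v : V} {A : Set V} {A' : Set V'} {P : V → Prop}
    {P' : V' → Prop} (hv : v ∈ A) (hv' : H.f v ∈ A')
    (hmem : ∀ x x', H.pphi v x = some x' → (x ∈ A ↔ x' ∈ A') ∧ (P x ↔ P' x')) :
    H.pphi v '' {x | x ∉ A ∧ P x} = some '' {x' | x' ∉ A' ∧ P' x'} ∧
    ∃ ψ : G.induce {x | x ∉ A ∧ P x} ≃g G'.induce {x' | x' ∉ A' ∧ P' x'},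
      ∀ x hx, H.pphi v x = some (ψ ⟨x, hx⟩).1 := by
  have hS : v ∉ {x | x ∉ A ∧ P x} := fun h => h.1 hv
  have hS' : H.f v ∉ {x' | x' ∉ A' ∧ P' x'} := fun h => h.1 hv'
  have hmem' x x' (h : H.pphi v x = some x') :=
    and_congr (not_congr (hmem x x' h).1) (hmem x x' h).2
  exact ⟨H.image_pphi_eq hS hS' hmem', H.exists_iso_induce hS hS' hmem'⟩

variable {H}

theorem mem_termsUpTo_of_alpha (hbpn : H.bp v₁ v₂ n = some (H.f v₂))
    (hbqn : H.bq v₁ v₂ n = some v₁) {v : V} (hv : v = v₁ ∨ v = v₂) :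
    v ∈ termsUpTo (H.bq v₁ v₂) n ∧ H.f v ∈ termsUpTo (H.bp v₁ v₂) n := by
  have hn : 1 ≤ n := Nat.one_le_iff_ne_zero.2 (by rintro rfl; cases hbqn)
  rcases hv with rfl | rfl
  exacts [⟨⟨n, hn, le_rfl, hbqn⟩, 1, le_rfl, hn, rfl⟩, ⟨⟨1, le_rfl, hn, rfl⟩, n, hn, le_rfl, hbpn⟩]

theorem AlphaTwo.image_and_iso (hα : H.AlphaTwo v₁ v₂ n) {v : V} (hv : v = v₁ ∨ v = v₂)
    {P : V → Prop} {P' : V' → Prop} (hP : ∀ x x', H.pphi v x = some x' → (P x ↔ P' x')) :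
    H.pphi v '' {x | x ∉ termsUpTo (H.bq v₁ v₂) n ∧ P x} =
      some '' {x' | x' ∉ termsUpTo (H.bp v₁ v₂) n ∧ P' x'} ∧
    ∃ ψ : G.induce {x | x ∉ termsUpTo (H.bq v₁ v₂) n ∧ P x} ≃g
        G'.induce {x' | x' ∉ termsUpTo (H.bp v₁ v₂) n ∧ P' x'},
      ∀ x hx, H.pphi v x = some (ψ ⟨x, hx⟩).1 :=
  let ⟨_, hblank, hbpn, hbqn⟩ := hα
  H.image_and_iso_of_compl (mem_termsUpTo_of_alpha hbpn hbqn hv).1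
    (mem_termsUpTo_of_alpha hbpn hbqn hv).2
    fun x x' h => ⟨mem_termsUpTo_bq_iff hblank hv h, hP x x' h⟩

end RCSetup

theorem stmt_17_general
    (H : RCSetup G G') (v₁ v₂ : V)
    (n : ℕ) (hα : H.AlphaTwo v₁ v₂ n)
    (a : ℕ → V) (a' : ℕ → V')
    (ha : ∀ i : ℕ, 1 ≤ i → i ≤ n → H.bq v₁ v₂ (n - i + 1) = some (a i))
    (ha' : ∀ i : ℕ, 1 ≤ i → i ≤ n → H.bp v₁ v₂ i = some (a' i))
    (Xs Ys : Set V) (Xs' Ys' : Set V')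
    (hX : Xs = {x : V | (∀ i : ℕ, 1 ≤ i → i ≤ n → x ≠ a i) ∧ H.psiPart v₁ v₂ x ≠ some x})
    (hY : Ys = {y : V | (∀ i : ℕ, 1 ≤ i → i ≤ n → y ≠ a i) ∧ H.psiPart v₁ v₂ y = some y})
    (hX' : Xs' = {x' : V' | (∀ i : ℕ, 1 ≤ i → i ≤ n → x' ≠ a' i) ∧
      H.psiPart' v₁ v₂ x' ≠ some x'})
    (hY' : Ys' = {y' : V' | (∀ i : ℕ, 1 ≤ i → i ≤ n → y' ≠ a' i) ∧
      H.psiPart' v₁ v₂ y' = some y'}) :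
    (H.pphi v₁ '' Xs = some '' Xs') ∧ (H.pphi v₂ '' Xs = some '' Xs') ∧
    (H.pphi v₁ '' Ys = some '' Ys') ∧ (H.pphi v₂ '' Ys = some '' Ys') ∧
    (∃ ψ : G.induce Xs ≃g G'.induce Xs',
      ∀ (x : V) (hx : x ∈ Xs), H.pphi v₁ x = some (ψ ⟨x, hx⟩).1) ∧
    (∃ ψ : G.induce Xs ≃g G'.induce Xs',
      ∀ (x : V) (hx : x ∈ Xs), H.pphi v₂ x = some (ψ ⟨x, hx⟩).1) ∧
    (∃ ψ : G.induce Ys ≃g G'.induce Ys',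
      ∀ (y : V) (hy : y ∈ Ys), H.pphi v₁ y = some (ψ ⟨y, hy⟩).1) ∧
    (∃ ψ : G.induce Ys ≃g G'.induce Ys',
      ∀ (y : V) (hy : y ∈ Ys), H.pphi v₂ y = some (ψ ⟨y, hy⟩).1) := by
  simp only [forall_ne_iff_notMem_termsUpTo_rev ha, forall_ne_iff_notMem_termsUpTo ha']
    at hX hY hX' hY'
  subst hX hY hX' hY'
  have hv₁ : v₁ = v₁ ∨ v₁ = v₂ := .inl rfl
  have hv₂ : v₂ = v₁ ∨ v₂ = v₂ := .inr rfl
  have hfix {v} (hv : v = v₁ ∨ v = v₂) x x' (h : H.pphi v x = some x') :=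
    RCSetup.psiPart_eq_self_iff_psiPart' hv h
  obtain ⟨hX₁, ψX₁⟩ := hα.image_and_iso hv₁ fun x x' h => not_congr (hfix hv₁ x x' h)
  obtain ⟨hX₂, ψX₂⟩ := hα.image_and_iso hv₂ fun x x' h => not_congr (hfix hv₂ x x' h)
  obtain ⟨hY₁, ψY₁⟩ := hα.image_and_iso hv₁ (hfix hv₁)
  obtain ⟨hY₂, ψY₂⟩ := hα.image_and_iso hv₂ (hfix hv₂)
  exact ⟨hX₁, hX₂, hY₁, hY₂, ψX₁, ψX₂, ψY₁, ψY₂⟩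

/-- Suppose there are normal-arrows `v₁ ⟶ v₂` and `v₂ ⟶ v₁` and the cycle `v₁, v₂` is
α-type with associated length `n` and vertices `a_i := b_{n−i+1}`, `a'_i := b'_i`.  With
`Ψ := φ_{v₂}⁻¹∘φ_{v₁}`, `Ψ' := φ_{v₂}∘φ_{v₁}⁻¹`,
`X := {x ∈ V(Γ)∖{a₁,…,a_n} : Ψ(x) ≠ x}`, `Y := {y ∈ V(Γ)∖{a₁,…,a_n} : Ψ(y) = y}`,
`X' := {x' ∈ V(Γ')∖{a'₁,…,a'_n} : Ψ'(x') ≠ x'}` and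
`Y' := {y' ∈ V(Γ')∖{a'₁,…,a'_n} : Ψ'(y') = y'}`, each of `φ_{v₁}` and `φ_{v₂}` maps `X`
onto `X'` and `Y` onto `Y'`, and restricts to graph isomorphisms `X ≅ X'` and `Y ≅ Y'`
(induced subgraphs). -/
theorem stmt_17 [Fintype V] [Fintype V']
    (h3 : 3 ≤ Fintype.card V) (h3' : 3 ≤ Fintype.card V')
    (H : RCSetup G G') (v₁ v₂ : V)
    (hN1 : H.Normal v₁ v₂) (hN2 : H.Normal v₂ v₁)
    (n : ℕ) (hα : H.AlphaTwo v₁ v₂ n)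
    (a : ℕ → V) (a' : ℕ → V')
    (ha : ∀ i : ℕ, 1 ≤ i → i ≤ n → H.bq v₁ v₂ (n - i + 1) = some (a i))
    (ha' : ∀ i : ℕ, 1 ≤ i → i ≤ n → H.bp v₁ v₂ i = some (a' i))
    (Xs Ys : Set V) (Xs' Ys' : Set V')
    (hX : Xs = {x : V | (∀ i : ℕ, 1 ≤ i → i ≤ n → x ≠ a i) ∧ H.psiPart v₁ v₂ x ≠ some x})
    (hY : Ys = {y : V | (∀ i : ℕ, 1 ≤ i → i ≤ n → y ≠ a i) ∧ H.psiPart v₁ v₂ y = some y})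
    (hX' : Xs' = {x' : V' | (∀ i : ℕ, 1 ≤ i → i ≤ n → x' ≠ a' i) ∧
      H.psiPart' v₁ v₂ x' ≠ some x'})
    (hY' : Ys' = {y' : V' | (∀ i : ℕ, 1 ≤ i → i ≤ n → y' ≠ a' i) ∧
      H.psiPart' v₁ v₂ y' = some y'}) :
    (H.pphi v₁ '' Xs = some '' Xs') ∧ (H.pphi v₂ '' Xs = some '' Xs') ∧
    (H.pphi v₁ '' Ys = some '' Ys') ∧ (H.pphi v₂ '' Ys = some '' Ys') ∧
    (∃ ψ : G.induce Xs ≃g G'.induce Xs',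
      ∀ (x : V) (hx : x ∈ Xs), H.pphi v₁ x = some (ψ ⟨x, hx⟩).1) ∧
    (∃ ψ : G.induce Xs ≃g G'.induce Xs',
      ∀ (x : V) (hx : x ∈ Xs), H.pphi v₂ x = some (ψ ⟨x, hx⟩).1) ∧
    (∃ ψ : G.induce Ys ≃g G'.induce Ys',
      ∀ (y : V) (hy : y ∈ Ys), H.pphi v₁ y = some (ψ ⟨y, hy⟩).1) ∧
    (∃ ψ : G.induce Ys ≃g G'.induce Ys',
      ∀ (y : V) (hy : y ∈ Ys), H.pphi v₂ y = some (ψ ⟨y, hy⟩).1) :=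
  stmt_17_general H v₁ v₂ n hα a a' ha ha' Xs Ys Xs' Ys' hX hY hX' hY'
end
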